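/- arXiv:1201.3566 — 3 statements merged into one kernel-verified Lean document; each statement's English description precedes it below -/
import Mathlib

section
/- For all vectors a, b in ℝ^N and all p in the open interval (1, 2), one has ⟨|a|^{p-2} a - |b|^{p-2} b, a - b⟩ ≥ (p-1) |a - b|² (|a|^p + |b|^p)^{(p-2)/p}, provided (|a|, |b|) ≠ (0,0). -/
/-!
Write `s = ‖a‖`, `t = ‖b‖`, `c = ⟪a, b⟫` and `K = (s² + t²)^((p-2)/2)`. Since `p ≤ 2`, the
`ℓᵖ`-norm of `(s, t)` dominates its `ℓ²`-norm, so `(s^p + t^p)^((p-2)/p) ≤ K`, and it remains to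
show `(p-1) (s² - 2c + t²) K ≤ s^(p-2) s² - (s^(p-2) + t^(p-2)) c + t^(p-2) t²`. Both sides are
affine in `c ∈ [-st, st]`, so it suffices to check the collinear cases `c = ± st`. For `c = st`
this is the tangent-line inequality of the concave function `x ↦ x^(p-1)` together with
`K ≤ s^(p-2)`; for `c = -st` it follows from `s K ≤ s^(p-1)` and `t K ≤ t^(p-1)`.
-/

open RealInnerProductSpace

namespace Real

lemma rpow_le_rpow_add_mul_rpow_sub_one_mul_sub {q s t : ℝ} (hq0 : 0 ≤ q) (hq1 : q ≤ 1)
    (hs : 0 < s) (ht : 0 ≤ t) : t ^ q ≤ s ^ q + q * s ^ (q - 1) * (t - s) := by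
  have bernoulli := rpow_one_add_le_one_add_mul_self (s := t / s - 1)
    (by linarith [div_nonneg ht hs.le]) hq0 hq1
  rw [add_sub_cancel, div_rpow ht hs.le, div_le_iff₀ (rpow_pos_of_pos hs q)] at bernoulli
  calc t ^ q ≤ (1 + q * (t / s - 1)) * s ^ q := bernoulli
    _ = s ^ q + q * (s ^ q / s) * (t - s) := by field_simp
    _ = s ^ q + q * s ^ (q - 1) * (t - s) := by rw [rpow_sub_one hs.ne']

lemma rpow_sq_add_sq_le {s z : ℝ} (t : ℝ) (hs : 0 < s) (hz : z ≤ 0) :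
    (s ^ 2 + t ^ 2) ^ (z / 2) ≤ s ^ z :=
  calc (s ^ 2 + t ^ 2) ^ (z / 2) ≤ (s ^ 2) ^ (z / 2) :=
        rpow_le_rpow_of_nonpos (by positivity) (by nlinarith) (by linarith)
    _ = s ^ z := by
        rw [← rpow_natCast, ← rpow_mul hs.le]
        push_cast; ring_nf

lemma mul_rpow_sq_add_sq_le {s z : ℝ} (t : ℝ) (hs : 0 ≤ s) (hz : z ≤ 0) :
    s * (s ^ 2 + t ^ 2) ^ (z / 2) ≤ s ^ (z + 1) := by
  rcases hs.eq_or_lt with rfl | hs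
  · simpa using rpow_nonneg le_rfl (z + 1)
  calc s * (s ^ 2 + t ^ 2) ^ (z / 2) ≤ s * s ^ z :=
        mul_le_mul_of_nonneg_left (rpow_sq_add_sq_le t hs hz) hs.le
    _ = s ^ (z + 1) := by rw [rpow_add_one hs.ne', mul_comm]

end Real

section Scalar

variable {p s t : ℝ}

lemma sub_sq_mul_rpow_sq_add_sq_le (hp1 : 1 ≤ p) (hp2 : p ≤ 2) (hs : 0 ≤ s) (ht : 0 ≤ t) :
    (p - 1) * (s - t) ^ 2 * (s ^ 2 + t ^ 2) ^ ((p - 2) / 2) ≤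
      (s ^ (p - 1) - t ^ (p - 1)) * (s - t) := by
  wlog hts : t < s generalizing s t
  · rcases (not_lt.mp hts).eq_or_lt with rfl | hst
    · simp
    · have := this ht hs hst
      rw [add_comm (t ^ 2)] at this
      linarith
  have hs : 0 < s := ht.trans_lt hts
  have tangent := Real.rpow_le_rpow_add_mul_rpow_sub_one_mul_sub (q := p - 1)
    (by linarith) (by linarith) hs ht
  have hK := Real.rpow_sq_add_sq_le t hs (show p - 2 ≤ 0 by linarith)
  rw [show p - 1 - 1 = p - 2 by ring] at tangent
  calc (p - 1) * (s - t) ^ 2 * (s ^ 2 + t ^ 2) ^ ((p - 2) / 2)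
      ≤ (p - 1) * (s - t) ^ 2 * s ^ (p - 2) := by gcongr
    _ ≤ (s ^ (p - 1) - t ^ (p - 1)) * (s - t) := by
        nlinarith [mul_le_mul_of_nonneg_left tangent (sub_nonneg.mpr hts.le)]

lemma add_sq_mul_rpow_sq_add_sq_le (hp1 : 1 ≤ p) (hp2 : p ≤ 2) (hs : 0 ≤ s) (ht : 0 ≤ t) :
    (p - 1) * (s + t) ^ 2 * (s ^ 2 + t ^ 2) ^ ((p - 2) / 2) ≤
      (s ^ (p - 1) + t ^ (p - 1)) * (s + t) := by
  have hz : p - 2 ≤ 0 := by linarith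
  have hsK := Real.mul_rpow_sq_add_sq_le t hs hz
  have htK := Real.mul_rpow_sq_add_sq_le s ht hz
  rw [add_comm (t ^ 2), show p - 2 + 1 = p - 1 by ring] at htK
  rw [show p - 2 + 1 = p - 1 by ring] at hsK
  have hst : 0 ≤ (s ^ (p - 1) + t ^ (p - 1)) * (s + t) := by positivity
  calc (p - 1) * (s + t) ^ 2 * (s ^ 2 + t ^ 2) ^ ((p - 2) / 2)
      = (p - 1) * (s + t) * (s * (s ^ 2 + t ^ 2) ^ ((p - 2) / 2) +
          t * (s ^ 2 + t ^ 2) ^ ((p - 2) / 2)) := by ring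
    _ ≤ (p - 1) * ((s ^ (p - 1) + t ^ (p - 1)) * (s + t)) := by
        rw [mul_assoc, mul_comm (s + t)]
        gcongr
    _ ≤ (s ^ (p - 1) + t ^ (p - 1)) * (s + t) := by nlinarith

end Scalar

lemma add_mul_nonneg_of_mem_Icc {A B x y c : ℝ} (hx : 0 ≤ A + B * x) (hy : 0 ≤ A + B * y)
    (hc : c ∈ Set.Icc x y) : 0 ≤ A + B * c := by
  rcases le_total 0 B with hB | hB <;> nlinarith [hc.1, hc.2]

lemma mul_sq_sub_two_mul_add_sq_mul_rpow_le {p s t c : ℝ} (hp1 : 1 < p) (hp2 : p ≤ 2)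
    (hs : 0 ≤ s) (ht : 0 ≤ t) (hc : |c| ≤ s * t) :
    (p - 1) * (s ^ 2 - 2 * c + t ^ 2) * (s ^ 2 + t ^ 2) ^ ((p - 2) / 2) ≤
      s ^ (p - 2) * s ^ 2 - (s ^ (p - 2) + t ^ (p - 2)) * c + t ^ (p - 2) * t ^ 2 := by
  have rpow_sub_two_mul {x : ℝ} (hx : 0 ≤ x) : x ^ (p - 2) * x = x ^ (p - 1) := by
    rw [← Real.rpow_add_one' hx (by linarith)]
    ring_nf
  have parallel := sub_sq_mul_rpow_sq_add_sq_le hp1.le hp2 hs ht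
  have antiparallel := add_sq_mul_rpow_sq_add_sq_le hp1.le hp2 hs ht
  rw [← rpow_sub_two_mul hs, ← rpow_sub_two_mul ht] at parallel antiparallel
  set u := s ^ (p - 2)
  set v := t ^ (p - 2)
  set K := (s ^ 2 + t ^ 2) ^ ((p - 2) / 2)
  have := add_mul_nonneg_of_mem_Icc (A := u * s ^ 2 + v * t ^ 2 - (p - 1) * (s ^ 2 + t ^ 2) * K)
    (B := 2 * (p - 1) * K - (u + v)) (x := -(s * t)) (y := s * t)
    (by linear_combination antiparallel) (by linear_combination parallel) (abs_le.mp hc)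
  linear_combination this

lemma rpow_add_rpow_rpow_le_sq_add_sq_rpow {p s t : ℝ} (hp0 : 0 < p) (hp2 : p ≤ 2)
    (hs : 0 ≤ s) (ht : 0 ≤ t) (hst : 0 < s ^ 2 + t ^ 2) :
    (s ^ p + t ^ p) ^ ((p - 2) / p) ≤ (s ^ 2 + t ^ 2) ^ ((p - 2) / 2) := by
  have lp_le := Real.rpow_add_rpow_le hs ht hp0 hp2
  norm_cast at lp_le
  have := Real.rpow_le_rpow_of_nonpos (by positivity) lp_le (show p - 2 ≤ 0 by linarith)
  rwa [← Real.rpow_mul (by positivity), ← Real.rpow_mul hst.le, one_div_mul_eq_div,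
    one_div_mul_eq_div] at this

lemma inner_smul_sub_smul_sub {E : Type*} [NormedAddCommGroup E] [InnerProductSpace ℝ E]
    (u v : ℝ) (a b : E) :
    ⟪u • a - v • b, a - b⟫ = u * ‖a‖ ^ 2 - (u + v) * ⟪a, b⟫ + v * ‖b‖ ^ 2 := by
  simp only [inner_sub_left, inner_sub_right, real_inner_smul_left, real_inner_self_eq_norm_sq,
    real_inner_comm a b]
  ring

theorem mul_norm_sub_sq_mul_rpow_le_inner {E : Type*} [NormedAddCommGroup E]
    [InnerProductSpace ℝ E] {p : ℝ} (hp1 : 1 < p) (hp2 : p ≤ 2) (a b : E) :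
    (p - 1) * ‖a - b‖ ^ 2 * (‖a‖ ^ p + ‖b‖ ^ p) ^ ((p - 2) / p) ≤
      ⟪‖a‖ ^ (p - 2) • a - ‖b‖ ^ (p - 2) • b, a - b⟫ := by
  by_cases hab : a = 0 ∧ b = 0
  · simp [hab.1, hab.2]
  have hst : 0 < ‖a‖ ^ 2 + ‖b‖ ^ 2 := by
    rcases not_and_or.mp hab with h | h <;> positivity
  rw [inner_smul_sub_smul_sub, norm_sub_sq_real]
  calc (p - 1) * (‖a‖ ^ 2 - 2 * ⟪a, b⟫ + ‖b‖ ^ 2) * (‖a‖ ^ p + ‖b‖ ^ p) ^ ((p - 2) / p)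
      ≤ (p - 1) * (‖a‖ ^ 2 - 2 * ⟪a, b⟫ + ‖b‖ ^ 2) * (‖a‖ ^ 2 + ‖b‖ ^ 2) ^ ((p - 2) / 2) := by
        gcongr
        · rw [← norm_sub_sq_real]; positivity
        · exact rpow_add_rpow_rpow_le_sq_add_sq_rpow (by linarith) hp2 (norm_nonneg a)
            (norm_nonneg b) hst
    _ ≤ _ := mul_sq_sub_two_mul_add_sq_mul_rpow_le hp1 hp2 (norm_nonneg a) (norm_nonneg b)
          (abs_real_inner_le_norm a b)

theorem stmt_1_general (N : ℕ) (p : ℝ) (hp : p ∈ Set.Ioo (1 : ℝ) 2)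
    (a b : EuclideanSpace ℝ (Fin N)) :
    ⟪(‖a‖ ^ (p - 2)) • a - (‖b‖ ^ (p - 2)) • b, a - b⟫ ≥
      (p - 1) * ‖a - b‖ ^ 2 * (‖a‖ ^ p + ‖b‖ ^ p) ^ ((p - 2) / p) :=
  mul_norm_sub_sq_mul_rpow_le_inner hp.1 hp.2.le a b

/-- For `p ∈ (1,2)` and `(a,b) ≠ (0,0)`:
`⟪|a|^{p-2} a - |b|^{p-2} b, a - b⟫ ≥ (p-1) |a-b|² (|a|^p + |b|^p)^{(p-2)/p}`. -/
theorem stmt_1 (N : ℕ) (p : ℝ) (hp : p ∈ Set.Ioo (1 : ℝ) 2)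
    (a b : EuclideanSpace ℝ (Fin N)) (hab : ¬(a = 0 ∧ b = 0)) :
    ⟪(‖a‖ ^ (p - 2)) • a - (‖b‖ ^ (p - 2)) • b, a - b⟫ ≥
      (p - 1) * ‖a - b‖ ^ 2 * (‖a‖ ^ p + ‖b‖ ^ p) ^ ((p - 2) / p) :=
  stmt_1_general N p hp a b
end

section
/- Let p ≥ 2 and q ≥ p/2. For all vectors a, b in ℝ^N with |a|, |b| ≤ K, there exists a constant C depending only on p, q, K such that ||a|^q - |b|^q|² ≤ C · ||a|^{(p-2)/2} a - |b|^{(p-2)/2} b|². -/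
/-!
Write `|a|^q = (|a|^{p/2})^{q/(p/2)}` and note that `|a|^{p/2}` is exactly the norm of
`|a|^{(p-2)/2} a`. Since `q/(p/2) ≥ 1`, the map `x ↦ x^{q/(p/2)}` is Lipschitz on the bounded
range `[0, K^{p/2}]`, and the reverse triangle inequality `| |u| - |v| | ≤ |u - v|` finishes.
-/

open Real Set

theorem abs_rpow_sub_rpow_le_of_mem_Icc {t M x y : ℝ} (ht : 1 ≤ t) (hx : x ∈ Icc 0 M)
    (hy : y ∈ Icc 0 M) : |x ^ t - y ^ t| ≤ t * M ^ (t - 1) * |x - y| := by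
  have hderiv : ∀ z ∈ Icc 0 M, HasDerivWithinAt (· ^ t) (t * z ^ (t - 1)) (Icc 0 M) z :=
    fun _ _ => (hasDerivAt_rpow_const (Or.inr ht)).hasDerivWithinAt
  have hbound : ∀ z ∈ Icc 0 M, ‖t * z ^ (t - 1)‖ ≤ t * M ^ (t - 1) := by
    intro z hz
    have ht0 : 0 ≤ t := zero_le_one.trans ht
    rw [norm_of_nonneg (mul_nonneg ht0 (rpow_nonneg hz.1 _))]
    exact mul_le_mul_of_nonneg_left (rpow_le_rpow hz.1 hz.2 (by linarith)) ht0
  simpa only [norm_eq_abs] using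
    (convex_Icc 0 M).norm_image_sub_le_of_norm_hasDerivWithin_le hderiv hbound hy hx

theorem norm_rpow_smul_self {E : Type*} [SeminormedAddCommGroup E] [NormedSpace ℝ E]
    {r : ℝ} (hr : r ≠ 0) (c : E) : ‖(‖c‖ ^ (r - 1)) • c‖ = ‖c‖ ^ r := by
  rw [norm_smul, norm_of_nonneg (by positivity)]
  rcases (norm_nonneg c).eq_or_lt with hc | hc
  · simp [← hc, zero_rpow hr]
  · rw [← rpow_add_one hc.ne', sub_add_cancel]

theorem abs_norm_rpow_sub_norm_rpow_le {E : Type*} [SeminormedAddCommGroup E]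
    [NormedSpace ℝ E] {r q K : ℝ} (hr : 0 < r) (hrq : r ≤ q) {a b : E} (ha : ‖a‖ ≤ K)
    (hb : ‖b‖ ≤ K) :
    |‖a‖ ^ q - ‖b‖ ^ q| ≤ q / r * K ^ (q - r) * ‖(‖a‖ ^ (r - 1)) • a - (‖b‖ ^ (r - 1)) • b‖ := by
  have hK : 0 ≤ K := (norm_nonneg a).trans ha
  have ht : 1 ≤ q / r := (one_le_div hr).mpr hrq
  have hmem : ∀ c : E, ‖c‖ ≤ K → ‖c‖ ^ r ∈ Icc 0 (K ^ r) := fun c hc =>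
    ⟨by positivity, rpow_le_rpow (norm_nonneg c) hc hr.le⟩
  have hpow : ∀ c : E, (‖c‖ ^ r) ^ (q / r) = ‖c‖ ^ q := fun c => by
    rw [← rpow_mul (norm_nonneg c), mul_div_cancel₀ q hr.ne']
  have hconst : (K ^ r) ^ (q / r - 1) = K ^ (q - r) := by
    rw [← rpow_mul hK, mul_sub, mul_div_cancel₀ q hr.ne', mul_one]
  calc |‖a‖ ^ q - ‖b‖ ^ q|
      = |(‖a‖ ^ r) ^ (q / r) - (‖b‖ ^ r) ^ (q / r)| := by rw [hpow, hpow]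
    _ ≤ q / r * K ^ (q - r) * |‖a‖ ^ r - ‖b‖ ^ r| := by
        rw [← hconst]
        exact abs_rpow_sub_rpow_le_of_mem_Icc ht (hmem a ha) (hmem b hb)
    _ ≤ q / r * K ^ (q - r) * ‖(‖a‖ ^ (r - 1)) • a - (‖b‖ ^ (r - 1)) • b‖ := by
        rw [← norm_rpow_smul_self hr.ne' a, ← norm_rpow_smul_self hr.ne' b]
        gcongr
        exact abs_norm_sub_norm_le _ _

/-- For `p ≥ 2`, `q ≥ p/2`, `K` a bound on `|a|, |b|`, there is `C = C(p,q,K) > 0` with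
`||a|^q - |b|^q|² ≤ C ||a|^{(p-2)/2} a - |b|^{(p-2)/2} b|²`. -/
theorem stmt_2 (N : ℕ) (p q K : ℝ) (hp : 2 ≤ p) (hq : p / 2 ≤ q) :
    ∃ C > (0 : ℝ), ∀ a b : EuclideanSpace ℝ (Fin N), ‖a‖ ≤ K → ‖b‖ ≤ K →
      |‖a‖ ^ q - ‖b‖ ^ q| ^ 2 ≤
        C * ‖(‖a‖ ^ ((p - 2) / 2)) • a - (‖b‖ ^ ((p - 2) / 2)) • b‖ ^ 2 := by
  have hr : 0 < p / 2 := by linarith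
  have hexp : (p - 2) / 2 = p / 2 - 1 := by ring
  set L := q / (p / 2) * max K 1 ^ (q - p / 2)
  have hL : 0 < L := by
    have : 0 < q := hr.trans_le hq
    positivity
  refine ⟨L ^ 2, by positivity, fun a b ha hb => ?_⟩
  have hK : ∀ c : EuclideanSpace ℝ (Fin N), ‖c‖ ≤ K → ‖c‖ ≤ max K 1 :=
    fun _ hc => hc.trans (le_max_left K 1)
  rw [hexp, ← mul_pow]
  gcongr
  exact abs_norm_rpow_sub_norm_rpow_le hr hq (hK a ha) (hK b hb)
end

section
/- Let p > 2 and let K > (N + p − 3)/ρ for some ρ > 0. Define ū(x) = C(1 − e^{−K(|x| − ρ)}) on {x ∈ ℝ^N : |x| ≥ ρ} with C > 0. Then for each n ≥ 1 and each x with |x| > ρ, one has −div((|∇ū|² + 1/n)^{(p−2)/2} ∇ū)(x) ≥ 0. -/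
open RealInnerProductSpace

/-! Away from the origin the flux `a(|∇ū|²) ∇ū` is the radial field `h(r) x / r` with
`h = (g² + 1/n)^((p-2)/2) g` and `g(r) = C K e^{-K(r-ρ)}`, and the divergence of such a field is
`h' + (N - 1) h / r`. Since `g' = -K g`, this equals
`g (g² + 1/n)^((p-4)/2) ((N - 1)(g² + 1/n)/r - K((p - 1) g² + 1/n))`, which is nonpositive
because `(N - 1)/r < K` for `r > ρ`. -/

section Radial

variable {E : Type*} [NormedAddCommGroup E] [InnerProductSpace ℝ E]

theorem hasFDerivAt_norm_of_ne_zero {x : E} (hx : x ≠ 0) :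
    HasFDerivAt (fun z : E => ‖z‖) (‖x‖⁻¹ • innerSL ℝ x) x := by
  have hsq : (‖x‖ : ℝ) ^ 2 ≠ 0 := pow_ne_zero _ (norm_ne_zero_iff.2 hx)
  have h := (Real.hasDerivAt_sqrt hsq).comp_hasFDerivAt x (hasStrictFDerivAt_norm_sq x).hasFDerivAt
  have hfun : ((fun t => √t) ∘ fun z : E => ‖z‖ ^ 2) = fun z => ‖z‖ := by
    funext z; exact Real.sqrt_sq (norm_nonneg z)
  rw [hfun, Real.sqrt_sq (norm_nonneg x)] at h
  refine h.congr_fderiv ?_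
  ext v
  simp
  field_simp

noncomputable def radialField (h : ℝ → ℝ) (y : E) : E := (h ‖y‖ / ‖y‖) • y

theorem HasDerivAt.hasGradientAt_comp_norm [CompleteSpace E] {φ g : ℝ → ℝ} {x : E}
    (hφ : HasDerivAt φ (g ‖x‖) ‖x‖) (hx : x ≠ 0) :
    HasGradientAt (fun z : E => φ ‖z‖) (radialField g x) x := by
  rw [hasGradientAt_iff_hasFDerivAt]
  refine (hφ.comp_hasFDerivAt x (hasFDerivAt_norm_of_ne_zero hx)).congr_fderiv ?_
  ext v
  simp [radialField]
  ring

theorem smul_radialField (a g : ℝ → ℝ) (y : E) :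
    a (‖radialField g y‖ ^ 2) • radialField g y
      = radialField (fun t => a (g t ^ 2) * g t) y := by
  rcases eq_or_ne y 0 with rfl | hy
  · simp [radialField]
  have hr : ‖y‖ ≠ 0 := norm_ne_zero_iff.2 hy
  have hnorm : ‖radialField g y‖ ^ 2 = g ‖y‖ ^ 2 := by
    rw [radialField, norm_smul, Real.norm_eq_abs, mul_pow, sq_abs]
    field_simp
  rw [hnorm, radialField, radialField, smul_smul, mul_div_assoc]

theorem OrthonormalBasis.sum_inner_fderiv_radialField {ι : Type*} [Fintype ι]
    (b : OrthonormalBasis ι ℝ E) {h : ℝ → ℝ} {h' : ℝ} {x : E} (hx : x ≠ 0)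
    (hh : HasDerivAt h h' ‖x‖) :
    ∑ i, ⟪fderiv ℝ (radialField h) x (b i), b i⟫
      = h' + (Fintype.card ι - 1) * h ‖x‖ / ‖x‖ := by
  have hr : ‖x‖ ≠ 0 := norm_ne_zero_iff.2 hx
  have hF : HasFDerivAt (radialField h) _ x :=
    ((hh.div (hasDerivAt_id ‖x‖) hr).comp_hasFDerivAt x (hasFDerivAt_norm_of_ne_zero hx)).smul
      (hasFDerivAt_id x)
  rw [hF.fderiv]
  simp only [Function.comp_apply, Pi.div_apply, id_eq, mul_one, add_apply,
    smul_apply, ContinuousLinearMap.id_apply,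
    ContinuousLinearMap.smulRight_apply, coe_innerSL_apply, smul_eq_mul, inner_add_left,
    real_inner_smul_left, b.inner_eq_one, Finset.sum_add_distrib, Finset.sum_const,
    Finset.card_univ, nsmul_eq_mul]
  have hterm : ∀ a : ℝ, (h' * ‖x‖ - h ‖x‖) / ‖x‖ ^ 2 * (‖x‖⁻¹ * a) * a
      = (h' * ‖x‖ - h ‖x‖) / ‖x‖ ^ 3 * a ^ 2 := fun a => by field_simp
  simp_rw [hterm, ← Finset.mul_sum, b.sum_sq_inner_left]
  field_simp
  ring

end Radial

theorem hasDerivAt_mul_exp_neg_mul_sub (a K ρ r : ℝ) :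
    HasDerivAt (fun t => a * Real.exp (-K * (t - ρ))) (-K * (a * Real.exp (-K * (r - ρ)))) r := by
  refine ((((hasDerivAt_id r).sub_const ρ).const_mul (-K)).exp.const_mul a).congr_deriv ?_
  simp only [id_eq, mul_one]
  ring

theorem hasDerivAt_mul_one_sub_exp (C K ρ r : ℝ) :
    HasDerivAt (fun t => C * (1 - Real.exp (-K * (t - ρ))))
      (C * K * Real.exp (-K * (r - ρ))) r := by
  have := ((hasDerivAt_mul_exp_neg_mul_sub 1 K ρ r).const_sub 1).const_mul C
  simp only [one_mul] at this
  exact this.congr_deriv (by ring)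

theorem HasDerivAt.rpow_sq_add_mul {g : ℝ → ℝ} {K c q r : ℝ}
    (hg : HasDerivAt g (-K * g r) r) (hA : 0 < g r ^ 2 + c) :
    HasDerivAt (fun t => (g t ^ 2 + c) ^ q * g t)
      (-K * g r * (g r ^ 2 + c) ^ (q - 1) * (2 * q * g r ^ 2 + (g r ^ 2 + c))) r := by
  refine ((((hg.pow 2).add_const c).rpow_const (p := q) (Or.inl hA.ne')).mul hg).congr_deriv ?_
  simp only [Pi.pow_apply, Nat.cast_ofNat]
  rw [show (g r ^ 2 + c) ^ q = (g r ^ 2 + c) ^ (q - 1) * (g r ^ 2 + c) by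
    rw [← Real.rpow_add_one hA.ne']; ring_nf]
  ring

theorem divergence_expProfile_nonpos {N K g c q r : ℝ} (hK : 0 ≤ K) (hNK : N - 1 ≤ K * r)
    (hr : 0 < r) (hg : 0 < g) (hc : 0 ≤ c) (hq : 0 ≤ q) :
    -K * g * (g ^ 2 + c) ^ (q - 1) * (2 * q * g ^ 2 + (g ^ 2 + c))
      + (N - 1) * ((g ^ 2 + c) ^ q * g) / r ≤ 0 := by
  have hA : 0 < g ^ 2 + c := by positivity
  rw [show (g ^ 2 + c) ^ q = (g ^ 2 + c) ^ (q - 1) * (g ^ 2 + c) by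
    rw [← Real.rpow_add_one hA.ne']; ring_nf]
  have hB : 0 < (g ^ 2 + c) ^ (q - 1) * g := by positivity
  have hbracket : (N - 1) / r * (g ^ 2 + c) ≤ K * (2 * q * g ^ 2 + (g ^ 2 + c)) := by
    have hNr : (N - 1) / r ≤ K := (div_le_iff₀ hr).2 hNK
    nlinarith [mul_nonneg (mul_nonneg hK hq) (sq_nonneg g)]
  have key : -K * g * (g ^ 2 + c) ^ (q - 1) * (2 * q * g ^ 2 + (g ^ 2 + c))
      + (N - 1) * ((g ^ 2 + c) ^ (q - 1) * (g ^ 2 + c) * g) / r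
      = (g ^ 2 + c) ^ (q - 1) * g
          * ((N - 1) / r * (g ^ 2 + c) - K * (2 * q * g ^ 2 + (g ^ 2 + c))) := by
    field_simp
    ring
  rw [key]
  exact mul_nonpos_of_nonneg_of_nonpos hB.le (by linarith)

theorem stmt_10_general (N : ℕ) (p ρ K C : ℝ) (hp : 2 < p) (hρ : 0 < ρ)
    (hK : (N + p - 3) / ρ < K) (hC : 0 < C) (n : ℕ) :
    ∀ x : EuclideanSpace ℝ (Fin N), ρ < ‖x‖ →
      0 ≤ -(∑ i : Fin N,
        ⟪fderiv ℝ
            (fun y : EuclideanSpace ℝ (Fin N) =>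
              ((‖gradient (fun z : EuclideanSpace ℝ (Fin N) =>
                    C * (1 - Real.exp (-K * (‖z‖ - ρ)))) y‖ ^ 2 + 1 / n) ^ ((p - 2) / 2)) •
                gradient (fun z : EuclideanSpace ℝ (Fin N) =>
                    C * (1 - Real.exp (-K * (‖z‖ - ρ)))) y)
            x (EuclideanSpace.basisFun (Fin N) ℝ i),
          EuclideanSpace.basisFun (Fin N) ℝ i⟫) := by
  intro x hx
  have hx0 : x ≠ 0 := norm_pos_iff.1 (hρ.trans hx)
  have hN : (1 : ℝ) ≤ N := by
    refine Nat.one_le_cast.2 (Nat.pos_of_ne_zero ?_)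
    rintro rfl
    exact hx0 (Subsingleton.elim _ _)
  have hKρ : N + p - 3 < K * ρ := (div_lt_iff₀ hρ).1 hK
  have hK0 : 0 < K := by nlinarith
  have hNK : (N : ℝ) - 1 ≤ K * ‖x‖ := by nlinarith
  let g : ℝ → ℝ := fun t => C * K * Real.exp (-K * (t - ρ))
  have hflux : (fun y : EuclideanSpace ℝ (Fin N) =>
      ((‖gradient (fun z : EuclideanSpace ℝ (Fin N) =>
            C * (1 - Real.exp (-K * (‖z‖ - ρ)))) y‖ ^ 2 + 1 / n) ^ ((p - 2) / 2)) •
        gradient (fun z : EuclideanSpace ℝ (Fin N) => C * (1 - Real.exp (-K * (‖z‖ - ρ)))) y)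
      =ᶠ[nhds x] radialField (fun t => (g t ^ 2 + 1 / n) ^ ((p - 2) / 2) * g t) := by
    filter_upwards [isOpen_ne.mem_nhds hx0] with y hy
    rw [((hasDerivAt_mul_one_sub_exp C K ρ ‖y‖).hasGradientAt_comp_norm (g := g) hy).gradient]
    exact smul_radialField (fun s => (s + 1 / n) ^ ((p - 2) / 2)) g y
  have hg : 0 < g ‖x‖ := by positivity
  rw [hflux.fderiv_eq, (EuclideanSpace.basisFun (Fin N) ℝ).sum_inner_fderiv_radialField hx0
    ((hasDerivAt_mul_exp_neg_mul_sub (C * K) K ρ ‖x‖).rpow_sq_add_mul (by positivity)),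
    Fintype.card_fin, neg_nonneg]
  exact divergence_expProfile_nonpos hK0.le hNK (hρ.trans hx) hg (by positivity)
    (by linarith)

/-- The radial comparison function `ū(x) = C(1 - e^{-K(|x|-ρ)})` with `p > 2`,
`K > (N+p-3)/ρ`, `ρ > 0`, `C > 0` satisfies
`-div((|∇ū|² + 1/n)^{(p-2)/2} ∇ū)(x) ≥ 0` for `|x| > ρ` and every `n ≥ 1`,
where the divergence is computed as the trace of the Jacobian of the flux. -/
theorem stmt_10 (N : ℕ) (p ρ K C : ℝ) (hp : 2 < p) (hρ : 0 < ρ)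
    (hK : (N + p - 3) / ρ < K) (hC : 0 < C) (n : ℕ) (hn : 1 ≤ n) :
    ∀ x : EuclideanSpace ℝ (Fin N), ρ < ‖x‖ →
      0 ≤ -(∑ i : Fin N,
        ⟪fderiv ℝ
            (fun y : EuclideanSpace ℝ (Fin N) =>
              ((‖gradient (fun z : EuclideanSpace ℝ (Fin N) =>
                    C * (1 - Real.exp (-K * (‖z‖ - ρ)))) y‖ ^ 2 + 1 / n) ^ ((p - 2) / 2)) •
                gradient (fun z : EuclideanSpace ℝ (Fin N) =>
                    C * (1 - Real.exp (-K * (‖z‖ - ρ)))) y)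
            x (EuclideanSpace.basisFun (Fin N) ℝ i),
          EuclideanSpace.basisFun (Fin N) ℝ i⟫) :=
  stmt_10_general N p ρ K C hp hρ hK hC n
end
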